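/- Let σ ⊆ R^N be a non-degenerate d-simplex, H a d-dimensional affine space, and suppose ∠(Aff σ, H) ≤ θ < π/2. Then the projected simplex π_H(σ) is a non-degenerate d-simplex and cos θ · height(σ) ≤ height(π_H σ). -/

import Mathlib

open Metric Set
open scoped Classical

noncomputable section

abbrev Euc (N : ℕ) := EuclideanSpace ℝ (Fin N)

variable {N : ℕ}

/-- The medial axis of `A`: points with at least two closest points in `A`. -/
def medialAxis (A : Set (Euc N)) : Set (Euc N) :=
  {x | ∃ a ∈ A, ∃ b ∈ A, a ≠ b ∧ dist x a = infDist x A ∧ dist x b = infDist x A}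

/-- `p` is a nearest point of `A` to `x`. -/
def IsNearestPt (A : Set (Euc N)) (x p : Euc N) : Prop :=
  p ∈ A ∧ dist x p = infDist x A

/-- `π` is a nearest-point projection map onto `A`, defined off the medial axis. -/
def IsNearestPtProj (A : Set (Euc N)) (π : Euc N → Euc N) : Prop :=
  ∀ x, x ∉ medialAxis A → IsNearestPt A x (π x)

/-- The angle between two linear subspaces: sup over unit vectors of `V₀` of the inf of
angles with unit vectors of `V₁`. -/
def subAngle (V₀ V₁ : Submodule ℝ (Euc N)) : ℝ :=
  sSup {a | ∃ v₀ ∈ V₀, ‖v₀‖ = 1 ∧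
    a = sInf {b | ∃ v₁ ∈ V₁, ‖v₁‖ = 1 ∧ b = InnerProductGeometry.angle v₀ v₁}}

/-- Angle between two affine subspaces. -/
def affAngle (H₀ H₁ : AffineSubspace ℝ (Euc N)) : ℝ :=
  subAngle H₀.direction H₁.direction

/-- Angle between the line through `u, v` and the affine subspace `H`. -/
def lineAngle (u v : Euc N) (H : AffineSubspace ℝ (Euc N)) : ℝ :=
  subAngle (Submodule.span ℝ {v - u}) H.direction

/-- Orthogonal projection onto an affine subspace (the identity if `H` is empty). -/
def projA (H : AffineSubspace ℝ (Euc N)) (x : Euc N) : Euc N :=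
  if h : (H : Set (Euc N)).Nonempty then
    h.choose + (H.direction.orthogonalProjection (x - h.choose) : Euc N)
  else x

/-- The minimal height of a simplex (over all vertices, distance to opposite facet). -/
def height (σ : Finset (Euc N)) : ℝ :=
  sInf ((fun v => infDist v (affineSpan ℝ ((σ.erase v : Finset (Euc N)) : Set (Euc N)))) '' σ)

/-- `σ` is a non-degenerate simplex: its vertices are affinely independent. -/
def Nondegenerate (σ : Finset (Euc N)) : Prop :=
  AffineIndependent ℝ (fun p : σ => (p : Euc N))

/-- The sphere centered at `z` of radius `r` circumscribes `σ`. -/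
def IsCircum (σ : Finset (Euc N)) (z : Euc N) (r : ℝ) : Prop :=
  ∀ p ∈ σ, dist p z = r

/-- `(z, r)` is the smallest circumscribing sphere of `σ`. -/
def IsMinCircum (σ : Finset (Euc N)) (z : Euc N) (r : ℝ) : Prop :=
  IsCircum σ z r ∧ ∀ z' r', IsCircum σ z' r' → r ≤ r'

/-- `(c, r)` is the smallest enclosing ball of `σ`. -/
def IsSEB (σ : Finset (Euc N)) (c : Euc N) (r : ℝ) : Prop :=
  (∀ p ∈ σ, dist p c ≤ r) ∧ ∀ c' r', (∀ p ∈ σ, dist p c' ≤ r') → r ≤ r'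

/-- `σ` is a Delaunay simplex of the point set `Q`: some circumscribing sphere of `σ`
bounds a ball containing no point of `Q` in its interior. -/
def IsDelaunay (Q : Set (Euc N)) (σ : Finset (Euc N)) : Prop :=
  (σ : Set (Euc N)) ⊆ Q ∧ ∃ z r, IsCircum σ z r ∧ ∀ q ∈ Q, r ≤ dist q z

/-- Separation of a point set: infimum of pairwise distances. -/
def sep (X : Set (Euc N)) : ℝ :=
  sInf {r | ∃ x ∈ X, ∃ y ∈ X, x ≠ y ∧ r = dist x y}

/-- A relation is a multiplicative `M`-distortion. -/
def MulDistortion (R : Set (Euc N × Euc N)) (M : ℝ) : Prop :=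
  ∀ p ∈ R, ∀ q ∈ R,
    (1 / (1 + M)) * dist p.1 q.1 ≤ dist p.2 q.2 ∧ dist p.2 q.2 ≤ (1 + M) * dist p.1 q.1

/-- A relation is an additive `A`-distortion. -/
def AddDistortion (R : Set (Euc N × Euc N)) (A : ℝ) : Prop :=
  ∀ p ∈ R, ∀ q ∈ R, |dist p.2 q.2 - dist p.1 q.1| ≤ A

/-- A relation is one-to-one: injective and functional. -/
def OneToOneRel (R : Set (Euc N × Euc N)) : Prop :=
  (∀ p ∈ R, ∀ q ∈ R, p.2 = q.2 → p.1 = q.1) ∧ (∀ p ∈ R, ∀ q ∈ R, p.1 = q.1 → p.2 = q.2)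

/-- `M` is a `C²` `d`-dimensional submanifold of `ℝᴺ` with tangent spaces given by `T`. -/
def IsC2Submanifold (d : ℕ) (M : Set (Euc N)) (T : Euc N → Submodule ℝ (Euc N)) : Prop :=
  ∀ m ∈ M, ∃ (φ : EuclideanSpace ℝ (Fin d) → Euc N) (U : Set (Euc N)),
    IsOpen U ∧ m ∈ U ∧ ContDiff ℝ 2 φ ∧ Function.Injective φ ∧
    (∀ x, Function.Injective (fderiv ℝ φ x)) ∧
    Set.range φ = M ∩ U ∧
    ∀ x, T (φ x) = LinearMap.range ((fderiv ℝ φ x).toLinearMap)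

/-- The family of affine spaces associated to a simplex `σ`: the affine hull of `σ`
together with the tangent spaces at projections of points of `Conv σ` onto `M`. -/
def stdFamily (σ : Finset (Euc N)) (T : Euc N → Submodule ℝ (Euc N)) (πM : Euc N → Euc N) :
    Set (AffineSubspace ℝ (Euc N)) :=
  insert (affineSpan ℝ (σ : Set (Euc N)))
    ((fun x => AffineSubspace.mk' (πM x) (T (πM x))) '' convexHull ℝ (σ : Set (Euc N)))

end

/-!
For `v` in the direction of `Aff σ` and a unit vector `u` of `H`, `cos ∠(v, u) = ⟪π v, u⟫ / ‖v‖ ≤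
‖π v‖ / ‖v‖`, so the angle bound gives `‖π v‖ ≥ cos θ ‖v‖`. Hence the affine map `π_H` expands
distances within `Aff σ` by at least `cos θ > 0`: it is injective there, so it preserves affine
independence, and it maps the hull of each facet onto the hull of the image facet, scaling every
vertex-to-facet distance by at least `cos θ`.
-/

open InnerProductGeometry

section Angle

variable {N : ℕ}

lemma subAngle_nonneg (V₀ V₁ : Submodule ℝ (Euc N)) : 0 ≤ subAngle V₀ V₁ :=
  Real.sSup_nonneg <| by
    rintro _ ⟨v₀, -, -, rfl⟩
    exact Real.sInf_nonneg <| by rintro _ ⟨v₁, -, -, rfl⟩; exact angle_nonneg _ _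

lemma arccos_norm_starProjection_le_angle (V : Submodule ℝ (Euc N)) {w u : Euc N}
    (hw : ‖w‖ = 1) (hu : u ∈ V) (hu1 : ‖u‖ = 1) :
    Real.arccos ‖V.starProjection w‖ ≤ angle w u := by
  have hinner : inner ℝ w u = inner ℝ (V.starProjection w) u := by
    rw [Submodule.inner_starProjection_left_eq_right, Submodule.starProjection_eq_self_iff.2 hu]
  rw [angle, hw, hu1, mul_one, div_one, hinner]
  exact Real.arccos_le_arccos <| (real_inner_le_norm _ _).trans_eq (by rw [hu1, mul_one])

lemma cos_le_norm_starProjection_of_subAngle_le {V₀ V₁ : Submodule ℝ (Euc N)} {θ : ℝ}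
    (hθ : θ ≤ Real.pi) (hang : subAngle V₀ V₁ ≤ θ) (hV₁ : V₁ ≠ ⊥)
    {w : Euc N} (hw : w ∈ V₀) (hw1 : ‖w‖ = 1) :
    Real.cos θ ≤ ‖V₁.starProjection w‖ := by
  obtain ⟨u, hu, hu1⟩ : ∃ u ∈ V₁, ‖u‖ = 1 := by
    obtain ⟨x, hx, hx0⟩ := Submodule.exists_mem_ne_zero_of_ne_bot hV₁
    exact ⟨‖x‖⁻¹ • x, V₁.smul_mem _ hx, norm_smul_inv_norm hx0⟩
  have hangles_bdd : ∀ v₀ : Euc N, BddBelow {b | ∃ v₁ ∈ V₁, ‖v₁‖ = 1 ∧ b = angle v₀ v₁} :=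
    fun v₀ => ⟨0, by rintro _ ⟨v₁, -, -, rfl⟩; exact angle_nonneg _ _⟩
  have hinf_le_pi : ∀ v₀ : Euc N,
      sInf {b | ∃ v₁ ∈ V₁, ‖v₁‖ = 1 ∧ b = angle v₀ v₁} ≤ Real.pi := fun v₀ =>
    (csInf_le (hangles_bdd v₀) ⟨u, hu, hu1, rfl⟩).trans (angle_le_pi _ _)
  have hinf_le : sInf {b | ∃ v₁ ∈ V₁, ‖v₁‖ = 1 ∧ b = angle w v₁} ≤ θ := by
    refine hang.trans' (le_csSup ?_ ⟨w, hw, hw1, rfl⟩)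
    exact ⟨Real.pi, by rintro _ ⟨v₀, -, -, rfl⟩; exact hinf_le_pi v₀⟩
  have harccos_le : Real.arccos ‖V₁.starProjection w‖ ≤ θ := by
    refine hinf_le.trans' (le_csInf ⟨_, u, hu, hu1, rfl⟩ ?_)
    rintro _ ⟨v₁, hv₁, hv₁1, rfl⟩
    exact arccos_norm_starProjection_le_angle V₁ hw1 hv₁ hv₁1
  have hle_one : ‖V₁.starProjection w‖ ≤ 1 := (V₁.norm_starProjection_apply_le w).trans hw1.le
  have hge_neg_one : -1 ≤ ‖V₁.starProjection w‖ := by linarith [norm_nonneg (V₁.starProjection w)]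
  calc Real.cos θ ≤ Real.cos (Real.arccos ‖V₁.starProjection w‖) :=
        Real.cos_le_cos_of_nonneg_of_le_pi (Real.arccos_nonneg _) hθ harccos_le
    _ = ‖V₁.starProjection w‖ := Real.cos_arccos hge_neg_one hle_one

lemma cos_mul_norm_le_norm_starProjection {V₀ V₁ : Submodule ℝ (Euc N)} {θ : ℝ}
    (hθ : θ ≤ Real.pi) (hang : subAngle V₀ V₁ ≤ θ)
    (hrank : Module.finrank ℝ V₀ ≤ Module.finrank ℝ V₁) {v : Euc N} (hv : v ∈ V₀) :
    Real.cos θ * ‖v‖ ≤ ‖V₁.starProjection v‖ := by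
  rcases eq_or_ne v 0 with rfl | hv0
  · simp
  have hV₁ : V₁ ≠ ⊥ := by
    rintro rfl
    rw [finrank_bot, Nat.le_zero, Submodule.finrank_eq_zero] at hrank
    exact hv0 (by simpa [hrank] using hv)
  have hunit := cos_le_norm_starProjection_of_subAngle_le hθ hang hV₁
    (V₀.smul_mem ‖v‖⁻¹ hv) (norm_smul_inv_norm hv0)
  rw [map_smul, norm_smul, norm_inv, norm_norm, ← div_eq_inv_mul,
    le_div_iff₀ (norm_pos_iff.2 hv0)] at hunit
  linarith

end Angle

lemma Finset.image_erase_of_injOn {α β : Type*} [DecidableEq α] [DecidableEq β] {f : α → β}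
    {s : Finset α} (hf : InjOn f s) {a : α} (ha : a ∈ s) :
    (s.image f).erase (f a) = (s.erase a).image f := by
  ext y
  simp only [Finset.mem_erase, Finset.mem_image]
  constructor
  · rintro ⟨hya, x, hx, rfl⟩
    exact ⟨x, ⟨fun hxa => hya (congrArg f hxa), hx⟩, rfl⟩
  · rintro ⟨x, ⟨hxa, hx⟩, rfl⟩
    exact ⟨fun h => hxa (hf hx ha h), x, hx, rfl⟩

lemma injOn_of_mul_dist_le {α β : Type*} [MetricSpace α] [PseudoMetricSpace β] {f : α → β}
    {s : Set α} {c : ℝ} (hc : 0 < c)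
    (hf : ∀ x ∈ s, ∀ y ∈ s, c * dist x y ≤ dist (f x) (f y)) : InjOn f s := by
  intro x hx y hy hxy
  have := hf x hx y hy
  rw [hxy, dist_self] at this
  exact dist_le_zero.1 (nonpos_of_mul_nonpos_right this hc)

lemma mul_infDist_le_infDist_image {α β : Type*} [PseudoMetricSpace α] [PseudoMetricSpace β]
    {f : α → β} {c : ℝ} (hc : 0 ≤ c) {x : α} {s : Set α}
    (hf : ∀ y ∈ s, c * dist x y ≤ dist (f x) (f y)) :
    c * infDist x s ≤ infDist (f x) (f '' s) := by
  rcases s.eq_empty_or_nonempty with rfl | hs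
  · simp
  rw [le_infDist (hs.image f)]
  rintro _ ⟨y, hy, rfl⟩
  exact (mul_le_mul_of_nonneg_left (infDist_le_dist_of_mem hy) hc).trans (hf y hy)

section Simplex

variable {N : ℕ}

lemma height_le_infDist {σ : Finset (Euc N)} {v : Euc N} (hv : v ∈ σ) :
    height σ ≤ infDist v (affineSpan ℝ ((σ.erase v : Finset (Euc N)) : Set (Euc N))) :=
  csInf_le ((σ.finite_toSet.image _).bddBelow) (mem_image_of_mem _ hv)

lemma Nondegenerate.image {σ : Finset (Euc N)} (hσ : Nondegenerate σ) {f : Euc N →ᵃ[ℝ] Euc N}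
    (hf : InjOn f (affineSpan ℝ (σ : Set (Euc N)))) : Nondegenerate (σ.image f) := by
  rcases σ.eq_empty_or_nonempty with rfl | hne
  · rwa [Finset.image_empty]
  set A := affineSpan ℝ (σ : Set (Euc N))
  have : Nonempty A := ((affineSpan_nonempty ℝ).2 hne.to_set).to_subtype
  let p : σ → A := fun v => ⟨v, subset_affineSpan ℝ _ v.2⟩
  have hp : AffineIndependent ℝ p := AffineIndependent.of_comp A.subtype hσ
  have hfA : Function.Injective (f.comp A.subtype) := fun x y h => Subtype.ext (hf x.2 y.2 h)
  have hrange : range (f.comp A.subtype ∘ p) = ((σ.image f : Finset (Euc N)) : Set (Euc N)) := by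
    ext y
    simp [p]
  have := (hp.map' _ hfA).range
  rwa [hrange] at this

lemma mul_height_le_height_image {σ : Finset (Euc N)} {c : ℝ} (hc : 0 ≤ c)
    {f : Euc N →ᵃ[ℝ] Euc N} (hinj : InjOn f σ)
    (hf : ∀ x ∈ affineSpan ℝ (σ : Set (Euc N)), ∀ y ∈ affineSpan ℝ (σ : Set (Euc N)),
      c * dist x y ≤ dist (f x) (f y)) :
    c * height σ ≤ height (σ.image f) := by
  rcases σ.eq_empty_or_nonempty with rfl | hσ
  · simp [height]
  refine le_csInf ((hσ.image f).to_set.image _) ?_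
  rintro _ ⟨_, hw, rfl⟩
  obtain ⟨v, hv, rfl⟩ := Finset.mem_image.1 hw
  have hfacet : affineSpan ℝ ((σ.erase v : Finset (Euc N)) : Set (Euc N)) ≤ affineSpan ℝ σ :=
    affineSpan_mono ℝ (Finset.coe_subset.2 (σ.erase_subset v))
  have hvA : v ∈ affineSpan ℝ (σ : Set (Euc N)) := subset_affineSpan ℝ _ hv
  dsimp only
  rw [Finset.image_erase_of_injOn hinj hv, Finset.coe_image, ← AffineSubspace.map_span,
    AffineSubspace.coe_map]
  exact (mul_le_mul_of_nonneg_left (height_le_infDist hv) hc).trans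
    (mul_infDist_le_infDist_image hc fun y hy => hf v hvA y (hfacet hy))

end Simplex

section Projection

variable {N : ℕ}

lemma projA_eq_orthogonalProjection (H : AffineSubspace ℝ (Euc N)) [Nonempty H] (x : Euc N) :
    projA H x = EuclideanGeometry.orthogonalProjection H x := by
  have hH : (H : Set (Euc N)).Nonempty := nonempty_coe_sort.1 ‹_›
  rw [projA, dif_pos hH, EuclideanGeometry.orthogonalProjection_apply_mem H hH.choose_spec]
  exact add_comm _ _

lemma dist_projA {H : AffineSubspace ℝ (Euc N)} (hH : (H : Set (Euc N)).Nonempty) (x y : Euc N) :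
    dist (projA H x) (projA H y) = ‖H.direction.starProjection (x - y)‖ := by
  rw [projA, projA, dif_pos hH, dif_pos hH, dist_eq_norm, add_sub_add_left_eq_sub,
    ← Submodule.coe_sub, ← map_sub, sub_sub_sub_cancel_right]
  rfl

lemma cos_mul_dist_le_dist_projA {A H : AffineSubspace ℝ (Euc N)}
    (hH : (H : Set (Euc N)).Nonempty) {θ : ℝ} (hθ : θ ≤ Real.pi) (hang : affAngle A H ≤ θ)
    (hrank : Module.finrank ℝ A.direction ≤ Module.finrank ℝ H.direction)
    {x y : Euc N} (hx : x ∈ A) (hy : y ∈ A) :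
    Real.cos θ * dist x y ≤ dist (projA H x) (projA H y) := by
  rw [dist_eq_norm, dist_projA hH]
  exact cos_mul_norm_le_norm_starProjection hθ hang hrank (A.vsub_mem_direction hx hy)

end Projection

theorem height_under_projection (N d : ℕ) (σ : Finset (Euc N)) (hσ : Nondegenerate σ)
    (hcard : σ.card = d + 1) (H : AffineSubspace ℝ (Euc N))
    (hne : (H : Set (Euc N)).Nonempty) (hd : Module.finrank ℝ H.direction = d)
    (θ : ℝ) (hθ : θ < Real.pi / 2)
    (hang : affAngle (affineSpan ℝ (σ : Set (Euc N))) H ≤ θ) :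
    Nondegenerate (σ.image (projA H)) ∧ (σ.image (projA H)).card = d + 1 ∧
      Real.cos θ * height σ ≤ height (σ.image (projA H)) := by
  have : Nonempty H := hne.to_subtype
  have hcos : 0 < Real.cos θ := Real.cos_pos_of_mem_Ioo
    ⟨by linarith [Real.pi_pos, (subAngle_nonneg _ _).trans hang], hθ⟩
  have hrank : Module.finrank ℝ (affineSpan ℝ (σ : Set (Euc N))).direction = d := by
    rw [direction_affineSpan, ← hσ.finrank_vectorSpan (n := d) (by rwa [Fintype.card_coe]),
      Subtype.range_coe_subtype, Finset.setOfPred_mem]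
  let f : Euc N →ᵃ[ℝ] Euc N :=
    H.subtype.comp (EuclideanGeometry.orthogonalProjection H).toAffineMap
  have hf : projA H = f := funext (projA_eq_orthogonalProjection H)
  have hexp : ∀ x ∈ affineSpan ℝ (σ : Set (Euc N)), ∀ y ∈ affineSpan ℝ (σ : Set (Euc N)),
      Real.cos θ * dist x y ≤ dist (f x) (f y) := fun x hx y hy =>
    hf ▸ cos_mul_dist_le_dist_projA hne (by linarith [Real.pi_pos]) hang (by rw [hrank, hd]) hx hy
  have hinj := injOn_of_mul_dist_le hcos hexp
  have hinjσ : InjOn f σ := hinj.mono (subset_affineSpan ℝ _)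
  rw [hf]
  exact ⟨hσ.image hinj, by rw [Finset.card_image_of_injOn hinjσ, hcard],
    mul_height_le_height_image hcos.le hinjσ hexp⟩
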